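/- arXiv:0707.0033 — 3 statements merged into one kernel-verified Lean document; each statement's English description precedes it below -/
import Mathlib

section
/- Let n ≥ 1 and let w_0, w_1, …, w_n be an orthonormal basis of ℝ^{n+1}. Then for each index i, writing w_i^0 for the first coordinate of w_i, one has Σ_{j ≠ i} Rm(w_i, w_j) = [1 + (n−1)(w_i^0)²]·K_0 + (n−1)·[1 − (w_i^0)²]·K_1. -/
open scoped RealInnerProductSpace Matrix

noncomputable section

/-- The algebraic curvature expression `Rm(u,v) = R(u,v,u,v)` of the rotationally symmetric
curvature tensor whose only nonvanishing components in an adapted orthonormal frame are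
`R_{α0α0} = K₀` and `R_{αβαβ} = K₁` (`1 ≤ α ≠ β ≤ n`), evaluated on vectors
`u = (u⁰, u')`, `v = (v⁰, v')` of `ℝ × ℝⁿ = ℝ^{n+1}`. -/
def RmQ (n : ℕ) (K0 K1 : ℝ) (u v : ℝ × EuclideanSpace ℝ (Fin n)) : ℝ :=
  K0 * (u.1 ^ 2 * ‖v.2‖ ^ 2 - 2 * u.1 * v.1 * ⟪u.2, v.2⟫ + v.1 ^ 2 * ‖u.2‖ ^ 2)
    + K1 * (‖u.2‖ ^ 2 * ‖v.2‖ ^ 2 - ⟪u.2, v.2⟫ ^ 2)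

/-- the computation (3.5).  For an orthonormal basis `w₀, …, w_n` of
`ℝ^{n+1}`, the Ricci curvature in the direction `w_i` is
`Σ_{j≠i} Rm(w_i, w_j) = [1 + (n-1)(w_i⁰)²] K₀ + (n-1)[1 - (w_i⁰)²] K₁`. -/
theorem ricci_of_orthonormal_basis (n : ℕ) (hn : 1 ≤ n) (K0 K1 : ℝ)
    (w : Fin (n + 1) → ℝ × EuclideanSpace ℝ (Fin n))
    (hw : ∀ i j, (w i).1 * (w j).1 + ⟪(w i).2, (w j).2⟫ = if i = j then 1 else 0)
    (i : Fin (n + 1)) :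
    ∑ j ∈ Finset.univ.erase i, RmQ n K0 K1 (w i) (w j)
      = (1 + ((n : ℝ) - 1) * (w i).1 ^ 2) * K0
        + ((n : ℝ) - 1) * (1 - (w i).1 ^ 2) * K1 := by
  -- key completeness identity : ∑ j, (w j).1 ^ 2 = 1
  have key : ∑ j, (w j).1 ^ 2 = 1 := by
    set M : Matrix (Fin (n+1)) (Fin (n+1)) ℝ :=
      fun j => Fin.cons ((w j).1) ((w j).2) with hMdef
    have hM : M * Mᵀ = 1 := by
      ext p q
      have := hw p q
      simp only [PiLp.inner_apply, RCLike.inner_apply, conj_trivial] at this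
      simp only [Matrix.mul_apply, Matrix.transpose_apply]
      simp only [Matrix.mul_apply, Matrix.transpose_apply, hMdef, Fin.sum_univ_succ,
        Fin.cons_zero, Fin.cons_succ, Matrix.one_apply]
      simp only [mul_comm ((w q).2.ofLp _)] at this
      rw [← this]

    have hM' : Mᵀ * M = 1 := mul_eq_one_comm.mp hM
    have h00 := congrFun (congrFun hM' 0) 0
    simp only [Matrix.mul_apply, Matrix.transpose_apply] at h00
    simp only [Matrix.mul_apply, Matrix.transpose_apply, hMdef, Fin.cons_zero,
      Matrix.one_apply_eq] at h00
    rw [← h00]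
    apply Finset.sum_congr rfl
    intro j _
    ring
  have hnorm : ∀ j, ‖(w j).2‖ ^ 2 = 1 - (w j).1 ^ 2 := by
    intro j
    have := hw j j
    simp only [if_pos rfl, if_true, real_inner_self_eq_norm_sq] at this
    nlinarith [this]
  have hinner : ∀ j, j ≠ i → ⟪(w i).2, (w j).2⟫ = -((w i).1 * (w j).1) := by
    intro j hj
    have := hw i j
    rw [if_neg (Ne.symm hj)] at this
    linarith
  have hterm : ∀ j ∈ Finset.univ.erase i,
      RmQ n K0 K1 (w i) (w j)
        = K0 * ((w i).1 ^ 2 + (w j).1 ^ 2) + K1 * (1 - (w i).1 ^ 2 - (w j).1 ^ 2) := by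
    intro j hj
    have hji : j ≠ i := (Finset.mem_erase.mp hj).1
    rw [RmQ, hnorm i, hnorm j, hinner j hji]
    ring
  rw [Finset.sum_congr rfl hterm]
  have hsum : ∑ j ∈ Finset.univ.erase i, (w j).1 ^ 2 = 1 - (w i).1 ^ 2 := by
    rw [Finset.sum_erase_eq_sub (Finset.mem_univ i), key]
  have hcard : ((Finset.univ.erase i).card : ℝ) = n := by
    rw [Finset.card_erase_of_mem (Finset.mem_univ i)]
    simp
  rw [Finset.sum_add_distrib, ← Finset.mul_sum, ← Finset.mul_sum,
    Finset.sum_add_distrib, Finset.sum_sub_distrib, Finset.sum_sub_distrib,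
    hsum]
  simp only [Finset.sum_const, nsmul_eq_mul, hcard]
  ring
end
end

section
/- Let n ≥ 2 and let w_0, w_1, …, w_n be an orthonormal basis of ℝ^{n+1}, and suppose K_0 > 0, K_1 > 0. If an index i satisfies (w_i^0)² ≤ 1/(n−1), where w_i^0 is the first coordinate of w_i, then Σ_{j ≠ i} Rm(w_i, w_j) < 2K_0 + (n−1)K_1; that is, the Ricci curvature in the direction w_i is strictly less than R/n, where R := 2nK_0 + n(n−1)K_1 is the scalar curvature. -/
open scoped RealInnerProductSpace

noncomputable section

/-- The algebraic curvature expression `Rm(u,v) = R(u,v,u,v)` of the rotationally symmetric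
curvature tensor whose only nonvanishing components in an adapted orthonormal frame are
`R_{α0α0} = K₀` and `R_{αβαβ} = K₁` (`1 ≤ α ≠ β ≤ n`), evaluated on vectors
`u = (u⁰, u')`, `v = (v⁰, v')` of `ℝ × ℝⁿ = ℝ^{n+1}`. -/
lemma aux_ineq (n : ℕ) (K0 K1 t : ℝ) (hK0 : 0 < K0) (hK1 : 0 < K1)
    (hn1 : (1:ℝ) ≤ (n:ℝ) - 1) (ht0 : 0 ≤ t) (ht1 : ((n:ℝ) - 1) * t ≤ 1) :
    (n:ℝ) * (K0 * t + K1 - K1 * t) + (K0 - K1) * (1 - t) < 2 * K0 + ((n:ℝ) - 1) * K1 := by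
  rcases eq_or_lt_of_le ht0 with h0 | h0
  · rw [← h0]
    nlinarith [hK0, hK1, hn1]
  · have hA : 0 ≤ (1 - ((n:ℝ)-1)*t) * K0 := mul_nonneg (by linarith) hK0.le
    have hB : 0 < (((n:ℝ)-1)*t) * K1 := mul_pos (mul_pos (by linarith) h0) hK1
    nlinarith [hA, hB]

/-- If `K₀, K₁ > 0` and `(w_i⁰)² ≤ 1/(n-1)`, then the Ricci curvature in
the direction `w_i` is strictly less than `2K₀ + (n-1)K₁ = R/n`, where
`R = 2nK₀ + n(n-1)K₁` is the scalar curvature. -/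
theorem ricci_lt_scalar_div_n (n : ℕ) (hn : 2 ≤ n) (K0 K1 : ℝ)
    (hK0 : 0 < K0) (hK1 : 0 < K1)
    (w : Fin (n + 1) → ℝ × EuclideanSpace ℝ (Fin n))
    (hw : ∀ i j, (w i).1 * (w j).1 + ⟪(w i).2, (w j).2⟫ = if i = j then 1 else 0)
    (i : Fin (n + 1)) (hi : (w i).1 ^ 2 ≤ 1 / ((n : ℝ) - 1)) :
    ∑ j ∈ Finset.univ.erase i, RmQ n K0 K1 (w i) (w j)
      < 2 * K0 + ((n : ℝ) - 1) * K1 := by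
  have hn1 : (1:ℝ) ≤ (n:ℝ) - 1 := by
    have : (2:ℝ) ≤ (n:ℝ) := by exact_mod_cast hn
    linarith
  -- embed into `WithLp 2 (ℝ × EuclideanSpace ℝ (Fin n))` to use inner-product machinery
  set W : Fin (n+1) → WithLp 2 (ℝ × EuclideanSpace ℝ (Fin n)) :=
    fun j => (WithLp.equiv 2 (ℝ × EuclideanSpace ℝ (Fin n))).symm (w j) with hWdef
  have hWinner : ∀ j k, ⟪W j, W k⟫ = (w j).1 * (w k).1 + ⟪(w j).2, (w k).2⟫ := by
    intro j k
    simp [hWdef, WithLp.prod_inner_apply, RCLike.inner_apply]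
    ring
  have hortho : Orthonormal ℝ W := by
    rw [orthonormal_iff_ite]
    intro j k
    rw [hWinner, hw]
  have hcard : Fintype.card (Fin (n+1)) = Module.finrank ℝ (WithLp 2 (ℝ × EuclideanSpace ℝ (Fin n))) := by
    have h1 : Module.finrank ℝ (WithLp 2 (ℝ × EuclideanSpace ℝ (Fin n))) = Module.finrank ℝ (ℝ × EuclideanSpace ℝ (Fin n)) :=
      (WithLp.linearEquiv 2 ℝ (ℝ × EuclideanSpace ℝ (Fin n))).finrank_eq
    simp [h1, Module.finrank_prod]
    omega
  let v := basisOfOrthonormalOfCardEqFinrank hortho hcard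
  have hv : ⇑v = W := coe_basisOfOrthonormalOfCardEqFinrank hortho hcard
  let b := v.toOrthonormalBasis (hv ▸ hortho)
  have hb : ⇑b = W := by rw [Module.Basis.coe_toOrthonormalBasis, hv]
  -- Parseval for the vector e = (1, 0)
  set e : WithLp 2 (ℝ × EuclideanSpace ℝ (Fin n)) := (WithLp.equiv 2 (ℝ × EuclideanSpace ℝ (Fin n))).symm ((1:ℝ), (0:EuclideanSpace ℝ (Fin n))) with hedef
  have hsum : ∑ j, (w j).1 ^ 2 = 1 := by
    have h := b.sum_inner_mul_inner e e
    have he : ∀ j, ⟪e, b j⟫ = (w j).1 := by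
      intro j
      rw [hb]
      simp [hedef, hWdef, WithLp.prod_inner_apply, RCLike.inner_apply]
    have hee : ⟪e, e⟫ = (1:ℝ) := by
      simp [hedef, WithLp.prod_inner_apply, RCLike.inner_apply]
    rw [hee] at h
    rw [← h]
    refine Finset.sum_congr rfl fun j _ => ?_
    have he2 : (inner ℝ (b j) e : ℝ) = (w j).1 := by rw [real_inner_comm]; exact he j
    rw [he j, he2, sq]
  have hnorm : ∀ j, ‖(w j).2‖ ^ 2 = 1 - (w j).1 ^ 2 := by
    intro j
    have := hw j j
    rw [if_pos rfl, real_inner_self_eq_norm_sq] at this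
    nlinarith [this]
  have hcross : ∀ j, j ≠ i → ⟪(w i).2, (w j).2⟫ = -((w i).1 * (w j).1) := by
    intro j hj
    have := hw i j
    rw [if_neg (fun h => hj h.symm)] at this
    linarith
  set t := (w i).1 ^ 2 with htdef
  have hsum' : ∑ j ∈ Finset.univ.erase i, RmQ n K0 K1 (w i) (w j)
      = ∑ j ∈ Finset.univ.erase i,
        ((K0 * t + K1 - K1 * t) + (K0 - K1) * (w j).1 ^ 2) := by
    refine Finset.sum_congr rfl fun j hj => ?_
    have hji : j ≠ i := Finset.ne_of_mem_erase hj
    rw [RmQ, hnorm i, hnorm j, hcross j hji, htdef]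
    ring
  have hS : ∑ j ∈ Finset.univ.erase i, (w j).1 ^ 2 = 1 - t := by
    rw [Finset.sum_erase_eq_sub (Finset.mem_univ i), hsum, htdef]
  have hcc : ((Finset.univ.erase i).card : ℝ) = n := by
    simp [Finset.card_erase_of_mem]
  rw [hsum', Finset.sum_add_distrib, Finset.sum_const, ← Finset.mul_sum, hS,
    nsmul_eq_mul, hcc]
  have ht0 : 0 ≤ t := sq_nonneg _
  have ht1 : ((n:ℝ) - 1) * t ≤ 1 := by
    rw [← le_div_iff₀' (by linarith : (0:ℝ) < (n:ℝ) - 1)]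
    exact hi
  have := aux_ineq n K0 K1 t hK0 hK1 hn1 ht0 ht1
  linarith
end
end

section
/- Let n ≥ 2 be an integer and let K_0 > 0, K_1 > 0, ε ∈ [0, 1/(2(n−1))), and F ≥ (n−1)/2 be real numbers. Set A := 1 − 2(K_0 + (n−1)(1−ε)K_1) and assume A > 0. Then 2εK_0 + (1−ε)K_1 + A²/(4F) < 1/(2(n−1)). -/
/-- the algebraic heart of estimate (3.8).  Let `n ≥ 2`, `K₀, K₁ > 0`,
`0 ≤ ε < 1/(2(n-1))`, `F ≥ (n-1)/2`, and set `A = 1 - 2(K₀ + (n-1)(1-ε)K₁)`; if `A > 0`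
then `2εK₀ + (1-ε)K₁ + A²/(4F) < 1/(2(n-1))`. -/
theorem level_set_curvature_estimate (n : ℕ) (hn : 2 ≤ n) (K0 K1 ε F A : ℝ)
    (hK0 : 0 < K0) (hK1 : 0 < K1)
    (hε0 : 0 ≤ ε) (hε1 : ε < 1 / (2 * ((n : ℝ) - 1)))
    (hF : ((n : ℝ) - 1) / 2 ≤ F)
    (hA : A = 1 - 2 * (K0 + ((n : ℝ) - 1) * (1 - ε) * K1))
    (hApos : 0 < A) :
    2 * ε * K0 + (1 - ε) * K1 + A ^ 2 / (4 * F) < 1 / (2 * ((n : ℝ) - 1)) := by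
  set m : ℝ := (n : ℝ) - 1 with hm
  have hm1 : (1 : ℝ) ≤ m := by
    have : (2 : ℝ) ≤ (n : ℝ) := by exact_mod_cast hn
    simp [hm]; linarith
  have hm0 : (0 : ℝ) < m := by linarith
  have hF0 : (0 : ℝ) < F := by
    have : m / 2 > 0 := by positivity
    linarith
  have hε' : ε < 1 / 2 := by
    have h12 : (1 : ℝ) / (2 * m) ≤ 1 / 2 := by
      apply div_le_div_of_nonneg_left (by norm_num) (by norm_num) (by linarith)
    linarith
  have hA1 : A < 1 := by
    have h1 : 0 < m * (1 - ε) * K1 := by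
      apply mul_pos (mul_pos hm0 (by linarith)) hK1
    rw [hA]; linarith
  have hstep : A ^ 2 / (4 * F) ≤ A ^ 2 / (2 * m) := by
    apply div_le_div_of_nonneg_left (sq_nonneg A) (by linarith) (by linarith)
  have hεm : ε * (2 * m) < 1 := (lt_div_iff₀ (by positivity)).mp hε1
  have hA2 : A ^ 2 < A := by nlinarith
  have hlt : (2 * ε * K0 + (1 - ε) * K1) * (2 * m) + A ^ 2 < 1 := by
    nlinarith [mul_pos hK0 (by linarith : (0:ℝ) < 1 - ε * (2 * m))]
  have key : 2 * ε * K0 + (1 - ε) * K1 + A ^ 2 / (2 * m) < 1 / (2 * m) := by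
    have h2m : (0 : ℝ) < 2 * m := by positivity
    rw [show 2 * ε * K0 + (1 - ε) * K1 + A ^ 2 / (2 * m)
        = ((2 * ε * K0 + (1 - ε) * K1) * (2 * m) + A ^ 2) / (2 * m) by field_simp]
    exact (div_lt_div_iff_of_pos_right h2m).mpr hlt
  linarith
end
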